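/- Fix an integer d ≥ 4 and let I ⊆ ℚ[c₁,c₂,c₃] be the ideal generated by s₀ = −2d(d−1)(d−2)(d−3)c₂ + 2d(d−1)²(d−2)c₁², s₁ = −2d(d−3)(d²−3d+3)c₃ + 2d(d−1)(2d²−8d+7)c₁c₂ − 2d(d−1)²(d−2)c₁³, and s₂ = 2d(2d³−10d²+16d−9)c₁c₃ + 2d(d−1)²(d−2)c₁⁴ + 2d(d−1)(d−2)(d−3)c₂² − 2d(d−1)(3d²−11d+9)c₁²c₂. Then the quotient ring ℚ[c₁,c₂,c₃]/I is isomorphic to ℚ[X]/(X⁴). -/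

import Mathlib

/-!
Modulo `s₀`, the class `c₂` is a multiple `a c₁²`; modulo `s₀, s₁`, the class `c₃` is a
multiple `b c₁³`; and modulo both, `s₂` is a multiple of `c₁⁴` with a coefficient that vanishes
for no `d ≥ 4`. So the relations are triangular and `I = (c₂ - a c₁², c₃ - b c₁³, c₁⁴)`, where
`a = c2Coeff d` and `b = c3Coeff d`. Eliminating `c₂` and `c₃` along the curve
`t ↦ (t, a t², b t³)` identifies the quotient with `ℚ[t]/(t⁴)`.
-/

noncomputable section

abbrev R3 : Type := MvPolynomial (Fin 3) ℚ

noncomputable def cc (i : Fin 3) : R3 := MvPolynomial.X i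

noncomputable def s0 (d : ℕ) : R3 :=
  -2 * (d : R3) * ((d : R3) - 1) * ((d : R3) - 2) * ((d : R3) - 3) * cc 1
    + 2 * (d : R3) * ((d : R3) - 1) ^ 2 * ((d : R3) - 2) * cc 0 ^ 2

noncomputable def s1 (d : ℕ) : R3 :=
  -2 * (d : R3) * ((d : R3) - 3) * ((d : R3) ^ 2 - 3 * (d : R3) + 3) * cc 2
    + 2 * (d : R3) * ((d : R3) - 1) * (2 * (d : R3) ^ 2 - 8 * (d : R3) + 7) * (cc 0 * cc 1)
    - 2 * (d : R3) * ((d : R3) - 1) ^ 2 * ((d : R3) - 2) * cc 0 ^ 3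

noncomputable def s2 (d : ℕ) : R3 :=
  2 * (d : R3) * (2 * (d : R3) ^ 3 - 10 * (d : R3) ^ 2 + 16 * (d : R3) - 9) * (cc 0 * cc 2)
    + 2 * (d : R3) * ((d : R3) - 1) ^ 2 * ((d : R3) - 2) * cc 0 ^ 4
    + 2 * (d : R3) * ((d : R3) - 1) * ((d : R3) - 2) * ((d : R3) - 3) * cc 1 ^ 2
    - 2 * (d : R3) * ((d : R3) - 1) * (3 * (d : R3) ^ 2 - 11 * (d : R3) + 9) * (cc 0 ^ 2 * cc 1)

noncomputable def Irel (d : ℕ) : Ideal R3 := Ideal.span {s0 d, s1 d, s2 d}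

open scoped Polynomial

namespace MvPolynomial

variable {R σ : Type*} [CommRing R]

def quotientAlgEquivOfEliminate (i₀ : σ) (p : σ → R[X]) (hp : p i₀ = Polynomial.X)
    (I : Ideal (MvPolynomial σ R)) (J : Ideal R[X])
    (hIJ : I ≤ J.comap (aeval p)) (hJI : J ≤ I.comap (Polynomial.aeval (X i₀)))
    (hX : ∀ i, X i - Polynomial.aeval (X i₀) (p i) ∈ I) :
    (MvPolynomial σ R ⧸ I) ≃ₐ[R] R[X] ⧸ J :=
  AlgEquiv.ofAlgHom (Ideal.quotientMapₐ J (aeval p) hIJ)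
    (Ideal.quotientMapₐ I (Polynomial.aeval (X i₀)) hJI)
    (Ideal.Quotient.algHom_ext R <| Polynomial.algHom_ext <| by
      simp [Ideal.quotient_map_mkₐ, hp])
    (Ideal.Quotient.algHom_ext R <| MvPolynomial.algHom_ext fun i => by
      simpa [Ideal.quotient_map_mkₐ] using (Ideal.Quotient.eq.2 (hX i)).symm)

def truncatedTwistedCubicIdeal (a b : R) (n : ℕ) : Ideal (MvPolynomial (Fin 3) R) :=
  Ideal.span {X 1 - C a * X 0 ^ 2, X 2 - C b * X 0 ^ 3, X 0 ^ n}

def quotientTruncatedTwistedCubicAlgEquiv (a b : R) (n : ℕ) :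
    (MvPolynomial (Fin 3) R ⧸ truncatedTwistedCubicIdeal a b n) ≃ₐ[R]
      R[X] ⧸ Ideal.span {(Polynomial.X ^ n : R[X])} :=
  quotientAlgEquivOfEliminate 0
    ![Polynomial.X, Polynomial.C a * Polynomial.X ^ 2, Polynomial.C b * Polynomial.X ^ 3] rfl _ _
    (by
      rw [truncatedTwistedCubicIdeal, Ideal.span_le, Set.insert_subset_iff, Set.insert_subset_iff,
        Set.singleton_subset_iff]
      refine ⟨?_, ?_, ?_⟩ <;> simp)
    (by
      rw [Ideal.span_le, Set.singleton_subset_iff, SetLike.mem_coe, Ideal.mem_comap, map_pow,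
        Polynomial.aeval_X]
      exact Ideal.subset_span (by simp))
    (fun i => by
      fin_cases i <;> simp [Polynomial.aeval_def, algebraMap_eq] <;>
        exact Ideal.subset_span (by simp))

end MvPolynomial

open MvPolynomial (C truncatedTwistedCubicIdeal)

def c2Coeff (d : ℕ) : ℚ := ((d : ℚ) - 1) / (d - 3)

def c3Coeff (d : ℕ) : ℚ :=
  ((d : ℚ) - 1) ^ 2 * (d ^ 2 - 3 * d + 1) / ((d - 3) ^ 2 * (d ^ 2 - 3 * d + 3))

def c1QuarticCoeff (d : ℕ) : ℚ :=
  2 * (d : ℚ) ^ 2 * (d - 1) ^ 2 * (d - 2) ^ 2 * (d ^ 2 - 3 * d + 1) /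
    ((d - 3) ^ 2 * (d ^ 2 - 3 * d + 3))

section Relations

variable {d : ℕ}

lemma s0_eq (hd : d ≠ 3) :
    s0 d =
      C (-2 * (d : ℚ) * (d - 1) * (d - 2) * (d - 3)) * (cc 1 - C (c2Coeff d) * cc 0 ^ 2) := by
  have : (d : ℚ) - 3 ≠ 0 := sub_ne_zero.2 (by exact_mod_cast hd)
  apply MvPolynomial.funext; intro x
  simp only [s0, cc, c2Coeff, map_add, map_sub, map_mul, map_neg, map_pow, map_natCast, map_ofNat,
    map_one, MvPolynomial.eval_X, MvPolynomial.eval_C]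
  field_simp
  ring

lemma s1_eq (hd : d ≠ 3) :
    s1 d = C (-2 * (d : ℚ) * (d - 3) * (d ^ 2 - 3 * d + 3)) * (cc 2 - C (c3Coeff d) * cc 0 ^ 3)
      + C (2 * (d : ℚ) * (d - 1) * (2 * d ^ 2 - 8 * d + 7)) * cc 0 *
        (cc 1 - C (c2Coeff d) * cc 0 ^ 2) := by
  have : (d : ℚ) - 3 ≠ 0 := sub_ne_zero.2 (by exact_mod_cast hd)
  have : (d : ℚ) * (d - 3) + 3 ≠ 0 := by nlinarith [sq_nonneg ((d : ℚ) - 3 / 2)]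
  apply MvPolynomial.funext; intro x
  simp only [s1, cc, c2Coeff, c3Coeff, map_add, map_sub, map_mul, map_neg, map_pow, map_natCast,
    map_ofNat, map_one, MvPolynomial.eval_X, MvPolynomial.eval_C]
  field_simp
  ring

lemma s2_eq (hd : d ≠ 3) :
    s2 d = C (c1QuarticCoeff d) * cc 0 ^ 4
      + C (2 * (d : ℚ) * (2 * d ^ 3 - 10 * d ^ 2 + 16 * d - 9)) * cc 0 *
        (cc 2 - C (c3Coeff d) * cc 0 ^ 3)
      + (C (2 * (d : ℚ) * (d - 1) * (d - 2) * (d - 3)) * cc 1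
          - C (2 * (d : ℚ) * (d - 1) * (2 * d ^ 2 - 8 * d + 7)) * cc 0 ^ 2) *
        (cc 1 - C (c2Coeff d) * cc 0 ^ 2) := by
  have : (d : ℚ) - 3 ≠ 0 := sub_ne_zero.2 (by exact_mod_cast hd)
  have : (d : ℚ) * (d - 3) + 3 ≠ 0 := by nlinarith [sq_nonneg ((d : ℚ) - 3 / 2)]
  apply MvPolynomial.funext; intro x
  simp only [s2, cc, c2Coeff, c3Coeff, c1QuarticCoeff, map_add, map_sub, map_mul, map_pow,
    map_natCast, map_ofNat, map_one, MvPolynomial.eval_X, MvPolynomial.eval_C]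
  field_simp
  ring

lemma Irel_le_truncatedTwistedCubicIdeal (hd : d ≠ 3) :
    Irel d ≤ truncatedTwistedCubicIdeal (c2Coeff d) (c3Coeff d) 4 := by
  set J := truncatedTwistedCubicIdeal (c2Coeff d) (c3Coeff d) 4
  have hg₁ : cc 1 - C (c2Coeff d) * cc 0 ^ 2 ∈ J := Ideal.subset_span (by simp [cc])
  have hg₂ : cc 2 - C (c3Coeff d) * cc 0 ^ 3 ∈ J := Ideal.subset_span (by simp [cc])
  have hg₃ : cc 0 ^ 4 ∈ J := Ideal.subset_span (by simp [cc])
  rw [Irel, Ideal.span_le, Set.insert_subset_iff, Set.insert_subset_iff, Set.singleton_subset_iff,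
    s0_eq hd, s1_eq hd, s2_eq hd]
  refine ⟨?_, ?_, ?_⟩ <;> apply_rules [add_mem, Ideal.mul_mem_left]

lemma truncatedTwistedCubicIdeal_le_Irel (hd : 4 ≤ d) :
    truncatedTwistedCubicIdeal (c2Coeff d) (c3Coeff d) 4 ≤ Irel d := by
  have hd3 : d ≠ 3 := by omega
  have hd' : (4 : ℚ) ≤ d := by exact_mod_cast hd
  have : (d : ℚ) ≠ 0 := by linarith
  have : (d : ℚ) - 1 ≠ 0 := by linarith
  have : (d : ℚ) - 2 ≠ 0 := by linarith
  have : (d : ℚ) - 3 ≠ 0 := by linarith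
  have : (d : ℚ) ^ 2 - 3 * d + 1 ≠ 0 := by nlinarith
  have : (d : ℚ) ^ 2 - 3 * d + 3 ≠ 0 := by nlinarith
  have hk₀ : IsUnit (C (-2 * (d : ℚ) * (d - 1) * (d - 2) * (d - 3)) : R3) :=
    (Ne.isUnit (by positivity)).map C
  have hk₁ : IsUnit (C (-2 * (d : ℚ) * (d - 3) * (d ^ 2 - 3 * d + 3)) : R3) :=
    (Ne.isUnit (by positivity)).map C
  have hk₂ : IsUnit (C (c1QuarticCoeff d) : R3) :=
    (Ne.isUnit (by unfold c1QuarticCoeff; positivity)).map C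
  have hs₀ : s0 d ∈ Irel d := Ideal.subset_span (by simp)
  have hs₁ : s1 d ∈ Irel d := Ideal.subset_span (by simp)
  have hs₂ : s2 d ∈ Irel d := Ideal.subset_span (by simp)
  rw [s0_eq hd3] at hs₀
  rw [s1_eq hd3] at hs₁
  rw [s2_eq hd3] at hs₂
  have hg₁ := (Ideal.unit_mul_mem_iff_mem _ hk₀).1 hs₀
  have hg₂ := (Ideal.unit_mul_mem_iff_mem _ hk₁).1 <|
    (Ideal.add_mem_iff_left _ (Ideal.mul_mem_left _ _ hg₁)).1 hs₁
  have hg₃ := (Ideal.unit_mul_mem_iff_mem _ hk₂).1 <|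
    (Ideal.add_mem_iff_left _ (Ideal.mul_mem_left _ _ hg₂)).1 <|
    (Ideal.add_mem_iff_left _ (Ideal.mul_mem_left _ _ hg₁)).1 hs₂
  rw [truncatedTwistedCubicIdeal, Ideal.span_le, Set.insert_subset_iff, Set.insert_subset_iff,
    Set.singleton_subset_iff]
  exact ⟨hg₁, hg₂, hg₃⟩

end Relations

theorem stmt_8 (d : ℕ) (hd : 4 ≤ d) :
    Nonempty ((R3 ⧸ Irel d) ≃+*
      (Polynomial ℚ ⧸ Ideal.span {(Polynomial.X ^ 4 : Polynomial ℚ)})) := by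
  have hI : Irel d = truncatedTwistedCubicIdeal (c2Coeff d) (c3Coeff d) 4 :=
    (Irel_le_truncatedTwistedCubicIdeal (by omega)).antisymm (truncatedTwistedCubicIdeal_le_Irel hd)
  rw [hI]
  exact ⟨(MvPolynomial.quotientTruncatedTwistedCubicAlgEquiv _ _ 4).toRingEquiv⟩
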